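/- In a series system, if p_i ≥ p_j then the posterior intervals are nested (P[u = 0 | y_i = 1] ≤ P[u = 0 | y_j = 1] and P[u = 0 | y_i = 0] ≥ P[u = 0 | y_j = 0]) and consequently for every concave loss l* : [0,1] → ℝ one has VoI_G(i) ≥ VoI_G(j); in particular, the component with the highest marginal failure probability (the most vulnerable component) maximizes VoI_G, regardless of the interdependence among components' states and of the adopted concave loss function. -/

import Mathlib

/-!
Writing `K = 1 - ε_FA - ε_FS`, the common error rates give `h_k = ε_FA + K p_k`, and since the
failure of `c_k` fails the series system, `P[u = 0, y_k = 0] = ε_FA p_π + K p_k`. Both posteriors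
are therefore of the form `(c p_π + x) / (c + x)` with `c ≥ 0`: `x = K p_k` after an alarm and
`x = -K p_k` after a clear outcome. Such a ratio increases with `x`, which nests the intervals.
The two posterior distributions have the same mean `p_π`, and the one of `c_j` lives inside the
interval of the one of `c_i`, so by concavity its expected loss is the larger one.
-/

open scoped Classical

/-- Probability of an event `E` under weights `w` on a finite outcome space. -/
noncomputable def Pr {Ω : Type*} [Fintype Ω] (w : Ω → ℝ) (E : Ω → Prop) : ℝ :=
  ∑ ω ∈ Finset.univ.filter E, w ω

/-- Conditional probability `P[A | B]`. -/
noncomputable def cPr {Ω : Type*} [Fintype Ω] (w : Ω → ℝ) (A B : Ω → Prop) : ℝ :=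
  Pr w (fun ω => A ω ∧ B ω) / Pr w B

/-- Posterior expected loss of inspecting a component with binary inspection outcome `y`
(`y = false` is an alarm), where `F` is the system-failure event and `l` the optimal
expected loss as a function of the system failure probability. -/
noncomputable def postLoss {Ω : Type*} [Fintype Ω] (w : Ω → ℝ) (F : Ω → Prop)
    (y : Ω → Bool) (l : ℝ → ℝ) : ℝ :=
  Pr w (fun ω => y ω = false) * l (cPr w F (fun ω => y ω = false))
    + (1 - Pr w (fun ω => y ω = false)) * l (cPr w F (fun ω => y ω = true))

/-- Global value of information of inspecting a component with inspection outcome `y`. -/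
noncomputable def VoIG {Ω : Type*} [Fintype Ω] (w : Ω → ℝ) (F : Ω → Prop)
    (y : Ω → Bool) (l : ℝ → ℝ) : ℝ :=
  l (Pr w F) - postLoss w F y l

section Probability

variable {Ω : Type*} [Fintype Ω] {w : Ω → ℝ}

lemma Pr_congr {E E' : Ω → Prop} (h : ∀ ω, E ω ↔ E' ω) : Pr w E = Pr w E' :=
  congrArg (Pr w) (funext fun ω => propext (h ω))

lemma Pr_nonneg (hw0 : ∀ ω, 0 ≤ w ω) (E : Ω → Prop) : 0 ≤ Pr w E :=
  Finset.sum_nonneg fun ω _ => hw0 ω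

lemma Pr_mono (hw0 : ∀ ω, 0 ≤ w ω) {E E' : Ω → Prop} (h : ∀ ω, E ω → E' ω) :
    Pr w E ≤ Pr w E' :=
  Finset.sum_le_sum_of_subset_of_nonneg (Finset.monotone_filter_right _ fun ω _ => h ω)
    fun ω _ _ => hw0 ω

lemma Pr_and_add_Pr_and_not (A B : Ω → Prop) :
    Pr w (fun ω => A ω ∧ B ω) + Pr w (fun ω => A ω ∧ ¬ B ω) = Pr w A := by
  unfold Pr
  rw [← Finset.sum_filter_add_sum_filter_not (Finset.univ.filter A) B w, Finset.filter_filter,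
    Finset.filter_filter]
  congr

lemma Pr_and_false_add_Pr_and_true (A : Ω → Prop) (y : Ω → Bool) :
    Pr w (fun ω => A ω ∧ y ω = false) + Pr w (fun ω => A ω ∧ y ω = true) = Pr w A := by
  rw [Pr_congr (E := fun ω => A ω ∧ y ω = true) (E' := fun ω => A ω ∧ ¬ y ω = false)
    (fun ω => by simp)]
  exact Pr_and_add_Pr_and_not A _

lemma Pr_true (hw1 : ∑ ω, w ω = 1) : Pr w (fun _ => True) = 1 := by
  simpa [Pr] using hw1

lemma Pr_true_eq_one_sub (hw1 : ∑ ω, w ω = 1) (y : Ω → Bool) :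
    Pr w (fun ω => y ω = true) = 1 - Pr w (fun ω => y ω = false) := by
  have h := Pr_and_false_add_Pr_and_true (w := w) (fun _ => True) y
  simp only [true_and, Pr_true hw1] at h
  linarith

lemma Pr_le_one (hw0 : ∀ ω, 0 ≤ w ω) (hw1 : ∑ ω, w ω = 1) (E : Ω → Prop) : Pr w E ≤ 1 := by
  simpa [Pr_true hw1] using Pr_mono hw0 (E := E) (E' := fun _ => True) fun _ _ => trivial

lemma Pr_mul_cPr (hw0 : ∀ ω, 0 ≤ w ω) (A B : Ω → Prop) :
    Pr w B * cPr w A B = Pr w (fun ω => A ω ∧ B ω) := by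
  by_cases hB : Pr w B = 0
  · have hAB : Pr w (fun ω => A ω ∧ B ω) ≤ Pr w B := Pr_mono hw0 fun _ h => h.2
    rw [hB, zero_mul]
    exact (hAB.trans hB.le).antisymm (Pr_nonneg hw0 _) |>.symm
  · exact mul_div_cancel₀ _ hB

lemma Pr_and_eq_of_cPr_eq (hw0 : ∀ ω, 0 ≤ w ω) {A B : Ω → Prop} {c : ℝ}
    (h : 0 < Pr w B → cPr w A B = c) : Pr w (fun ω => A ω ∧ B ω) = c * Pr w B := by
  rcases (Pr_nonneg hw0 B).eq_or_lt with hB | hB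
  · rw [← hB, mul_zero, ← Pr_mul_cPr hw0, ← hB, zero_mul]
  · rw [← Pr_mul_cPr hw0, h hB, mul_comm]

lemma cPr_mem_Icc (hw0 : ∀ ω, 0 ≤ w ω) (A B : Ω → Prop) : cPr w A B ∈ Set.Icc 0 1 :=
  ⟨div_nonneg (Pr_nonneg hw0 _) (Pr_nonneg hw0 _),
    div_le_one_of_le₀ (Pr_mono hw0 fun _ h => h.2) (Pr_nonneg hw0 _)⟩

lemma Pr_mul_cPr_add_Pr_mul_cPr (hw0 : ∀ ω, 0 ≤ w ω) (hw1 : ∑ ω, w ω = 1) (A : Ω → Prop)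
    (y : Ω → Bool) :
    Pr w (fun ω => y ω = false) * cPr w A (fun ω => y ω = false)
      + (1 - Pr w (fun ω => y ω = false)) * cPr w A (fun ω => y ω = true) = Pr w A := by
  rw [← Pr_true_eq_one_sub hw1, Pr_mul_cPr hw0, Pr_mul_cPr hw0]
  exact Pr_and_false_add_Pr_and_true A y

lemma Pr_and_eq_sum_fiber {α : Type*} [Fintype α] (X : Ω → α) (Q : α → Prop) (R : Ω → Prop) :
    Pr w (fun ω => Q (X ω) ∧ R ω) = ∑ a ∈ Finset.univ.filter Q, Pr w (fun ω => R ω ∧ X ω = a) := by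
  rw [Pr, ← Finset.sum_fiberwise_of_maps_to (t := Finset.univ.filter Q) (g := X)
    (fun ω hω => by simp_all)]
  refine Finset.sum_congr rfl fun a ha => ?_
  rw [Pr, Finset.filter_filter]
  congr 1
  ext ω
  simp only [Finset.mem_filter, Finset.mem_univ, true_and] at ha ⊢
  constructor
  · exact fun h => ⟨h.1.2, h.2⟩
  · exact fun h => ⟨⟨h.2 ▸ ha, h.1⟩, h.2⟩

lemma Pr_comp_eq_sum_fiber {α : Type*} [Fintype α] (X : Ω → α) (Q : α → Prop) :
    Pr w (fun ω => Q (X ω)) = ∑ a ∈ Finset.univ.filter Q, Pr w (fun ω => X ω = a) := by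
  simpa using Pr_and_eq_sum_fiber (w := w) X Q (fun _ => True)

end Probability

section Inspection

variable {Ω ι : Type*} [Fintype Ω] {w : Ω → ℝ} {s : Ω → ι → Bool} {k : ι} {εFA εFS : ℝ}
  {y : Ω → Bool}

def IsInspection (w : Ω → ℝ) (s : Ω → ι → Bool) (k : ι) (εFA εFS : ℝ) (y : Ω → Bool) : Prop :=
  ∀ σ : ι → Bool, 0 < Pr w (fun ω => s ω = σ) →
    cPr w (fun ω => y ω = false) (fun ω => s ω = σ) = if σ k = true then εFA else 1 - εFS

lemma IsInspection.Pr_alarm_and_state (hy : IsInspection w s k εFA εFS y)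
    (hw0 : ∀ ω, 0 ≤ w ω) (σ : ι → Bool) :
    Pr w (fun ω => y ω = false ∧ s ω = σ)
      = εFA * Pr w (fun ω => s ω = σ)
        + (1 - εFA - εFS) * Pr w (fun ω => s ω k = false ∧ s ω = σ) := by
  rw [Pr_and_eq_of_cPr_eq hw0 (hy σ)]
  cases hσ : σ k
  · rw [Pr_congr (E' := fun ω => s ω = σ) fun ω => ⟨And.right, fun h => ⟨h ▸ hσ, h⟩⟩]
    simp only [Bool.false_eq_true, if_false]
    ring
  · have hempty : Pr w (fun ω => s ω k = false ∧ s ω = σ) = 0 := by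
      refine Finset.sum_eq_zero fun ω hω => ?_
      simp only [Finset.mem_filter, Finset.mem_univ, true_and] at hω
      obtain ⟨hk, rfl⟩ := hω
      simp [hσ] at hk
    rw [hempty, if_pos rfl]
    ring

lemma IsInspection.Pr_and_alarm [Fintype ι] (hy : IsInspection w s k εFA εFS y)
    (hw0 : ∀ ω, 0 ≤ w ω) (Q : (ι → Bool) → Prop) :
    Pr w (fun ω => Q (s ω) ∧ y ω = false)
      = εFA * Pr w (fun ω => Q (s ω))
        + (1 - εFA - εFS) * Pr w (fun ω => Q (s ω) ∧ s ω k = false) := by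
  rw [Pr_and_eq_sum_fiber s Q, Pr_and_eq_sum_fiber s Q, Pr_comp_eq_sum_fiber s Q, Finset.mul_sum,
    Finset.mul_sum, ← Finset.sum_add_distrib]
  exact Finset.sum_congr rfl fun σ _ => hy.Pr_alarm_and_state hw0 σ

lemma IsInspection.Pr_alarm [Fintype ι] (hy : IsInspection w s k εFA εFS y)
    (hw0 : ∀ ω, 0 ≤ w ω) (hw1 : ∑ ω, w ω = 1) :
    Pr w (fun ω => y ω = false) = εFA + (1 - εFA - εFS) * Pr w (fun ω => s ω k = false) := by
  simpa [Pr_true hw1] using hy.Pr_and_alarm hw0 (fun _ => True)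

lemma IsInspection.Pr_seriesFail_and_alarm [Fintype ι] (hy : IsInspection w s k εFA εFS y)
    (hw0 : ∀ ω, 0 ≤ w ω) :
    Pr w (fun ω => (∃ m, s ω m = false) ∧ y ω = false)
      = εFA * Pr w (fun ω => ∃ m, s ω m = false)
        + (1 - εFA - εFS) * Pr w (fun ω => s ω k = false) := by
  rw [hy.Pr_and_alarm hw0 (fun σ => ∃ m, σ m = false), Pr_congr (E := fun ω => (∃ m, s ω m = false) ∧ s ω k = false)
    fun ω => ⟨And.right, fun h => ⟨⟨k, h⟩, h⟩⟩]

lemma IsInspection.cPr_seriesFail_alarm [Fintype ι] (hy : IsInspection w s k εFA εFS y)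
    (hw0 : ∀ ω, 0 ≤ w ω) (hw1 : ∑ ω, w ω = 1) :
    cPr w (fun ω => ∃ m, s ω m = false) (fun ω => y ω = false)
      = (εFA * Pr w (fun ω => ∃ m, s ω m = false)
          + (1 - εFA - εFS) * Pr w (fun ω => s ω k = false))
        / (εFA + (1 - εFA - εFS) * Pr w (fun ω => s ω k = false)) := by
  rw [cPr, hy.Pr_seriesFail_and_alarm hw0, hy.Pr_alarm hw0 hw1]

lemma IsInspection.cPr_seriesFail_clear [Fintype ι] (hy : IsInspection w s k εFA εFS y)
    (hw0 : ∀ ω, 0 ≤ w ω) (hw1 : ∑ ω, w ω = 1) :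
    cPr w (fun ω => ∃ m, s ω m = false) (fun ω => y ω = true)
      = ((1 - εFA) * Pr w (fun ω => ∃ m, s ω m = false)
          - (1 - εFA - εFS) * Pr w (fun ω => s ω k = false))
        / ((1 - εFA) - (1 - εFA - εFS) * Pr w (fun ω => s ω k = false)) := by
  have htotal := Pr_and_false_add_Pr_and_true (w := w) (fun ω => ∃ m, s ω m = false) y
  rw [hy.Pr_seriesFail_and_alarm hw0] at htotal
  rw [cPr, Pr_true_eq_one_sub hw1, hy.Pr_alarm hw0 hw1]
  congr 1 <;> linarith

end Inspection

section Ratio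

variable {c P x x' : ℝ}

lemma mul_add_div_add_mono (hc : 0 ≤ c) (hP : P ≤ 1) (hx : 0 < c + x) (hxx' : x ≤ x') :
    (c * P + x) / (c + x) ≤ (c * P + x') / (c + x') := by
  rw [div_le_div_iff₀ hx (by linarith)]
  nlinarith [mul_nonneg (mul_nonneg hc (sub_nonneg.2 hxx')) (sub_nonneg.2 hP)]

lemma le_mul_add_div_add (hP : P ≤ 1) (hx : 0 < c + x) (hx0 : 0 ≤ x) :
    P ≤ (c * P + x) / (c + x) := by
  rw [le_div_iff₀ hx]
  nlinarith [mul_nonneg hx0 (sub_nonneg.2 hP)]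

lemma mul_add_div_add_le (hP : P ≤ 1) (hx : 0 < c + x) (hx0 : x ≤ 0) :
    (c * P + x) / (c + x) ≤ P := by
  rw [div_le_iff₀ hx]
  nlinarith [mul_nonneg (neg_nonneg.2 hx0) (sub_nonneg.2 hP)]

end Ratio

section Concave

variable {s : Set ℝ} {l : ℝ → ℝ} {a b : ℝ}

lemma ConcaveOn.chord_le (hl : ConcaveOn ℝ s l) (ha : a ∈ s) (hb : b ∈ s) {x : ℝ}
    (hx : x ∈ Set.Icc a b) : (b - x) * l a + (x - a) * l b ≤ (b - a) * l x := by
  obtain ⟨hax, hxb⟩ := hx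
  rcases (hax.trans hxb).eq_or_lt with rfl | hab
  · obtain rfl : x = a := le_antisymm hxb hax
    simp
  have hba : 0 < b - a := sub_pos.2 hab
  have key := hl.2 ha hb (div_nonneg (sub_nonneg.2 hxb) hba.le)
    (div_nonneg (sub_nonneg.2 hax) hba.le) (by field_simp; ring)
  have hx : (b - x) / (b - a) * a + (x - a) / (b - a) * b = x := by field_simp; ring
  simp only [smul_eq_mul, hx] at key
  rw [div_mul_eq_mul_div, div_mul_eq_mul_div, ← add_div, div_le_iff₀ hba] at key
  linarith

/-- Both sides are compared with the chord of `l` over `[a, b]`, which is affine. -/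
lemma ConcaveOn.mul_add_mul_le_of_mem_Icc (hl : ConcaveOn ℝ s l) (ha : a ∈ s) (hb : b ∈ s)
    {a' b' t t' : ℝ} (ha' : a' ∈ Set.Icc a b) (hb' : b' ∈ Set.Icc a b) (ht' : t' ∈ Set.Icc 0 1)
    (hmean : t' * b' + (1 - t') * a' = t * b + (1 - t) * a) :
    t * l b + (1 - t) * l a ≤ t' * l b' + (1 - t') * l a' := by
  rcases (ha'.1.trans ha'.2).eq_or_lt with rfl | hab
  · obtain rfl : a' = a := le_antisymm ha'.2 ha'.1
    obtain rfl : b' = a' := le_antisymm hb'.2 hb'.1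
    linarith
  have hchord_a' := mul_le_mul_of_nonneg_left (hl.chord_le ha hb ha') (sub_nonneg.2 ht'.2)
  have hchord_b' := mul_le_mul_of_nonneg_left (hl.chord_le ha hb hb') ht'.1
  refine le_of_mul_le_mul_left ?_ (sub_pos.2 hab)
  linear_combination hchord_a' + hchord_b' + (l a - l b) * hmean

end Concave

theorem series_global_prefers_most_vulnerable_general {Ω : Type*} [Fintype Ω] {N : ℕ} (w : Ω → ℝ)
    (hw0 : ∀ ω, 0 ≤ w ω) (hw1 : ∑ ω, w ω = 1)
    (s : Ω → Fin N → Bool) (y : Fin N → Ω → Bool)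
    (εFA εFS : ℝ) (hFA0 : 0 ≤ εFA) (hFA : εFA < 1/2) (hFS : εFS < 1/2)
    (hemit : ∀ (k : Fin N) (σ : Fin N → Bool), 0 < Pr w (fun ω => s ω = σ) →
      cPr w (fun ω => y k ω = false) (fun ω => s ω = σ)
        = if σ k = true then εFA else 1 - εFS)
    (i j : Fin N)
    (hi1 : Pr w (fun ω => y i ω = false) < 1)
    (hj0 : 0 < Pr w (fun ω => y j ω = false)) (hj1 : Pr w (fun ω => y j ω = false) < 1)
    (hpij : Pr w (fun ω => s ω j = false) ≤ Pr w (fun ω => s ω i = false)) :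
    (cPr w (fun ω => ∃ k, s ω k = false) (fun ω => y i ω = true)
        ≤ cPr w (fun ω => ∃ k, s ω k = false) (fun ω => y j ω = true)
      ∧ cPr w (fun ω => ∃ k, s ω k = false) (fun ω => y j ω = false)
        ≤ cPr w (fun ω => ∃ k, s ω k = false) (fun ω => y i ω = false))
    ∧ ∀ l : ℝ → ℝ, ConcaveOn ℝ (Set.Icc (0:ℝ) 1) l →
        VoIG w (fun ω => ∃ k, s ω k = false) (y j) l
          ≤ VoIG w (fun ω => ∃ k, s ω k = false) (y i) l := by
  have hyi : IsInspection w s i εFA εFS (y i) := hemit i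
  have hyj : IsInspection w s j εFA εFS (y j) := hemit j
  have hK : 0 ≤ 1 - εFA - εFS := by linarith
  have hKp := mul_le_mul_of_nonneg_left hpij hK
  have hKpj := mul_nonneg hK (Pr_nonneg hw0 fun ω => s ω j = false)
  have hP1 := Pr_le_one hw0 hw1 fun ω => ∃ k, s ω k = false
  rw [hyi.Pr_alarm hw0 hw1] at hi1
  rw [hyj.Pr_alarm hw0 hw1] at hj0 hj1
  have hclear : cPr w (fun ω => ∃ k, s ω k = false) (fun ω => y i ω = true)
      ≤ cPr w (fun ω => ∃ k, s ω k = false) (fun ω => y j ω = true) := by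
    rw [hyi.cPr_seriesFail_clear hw0 hw1, hyj.cPr_seriesFail_clear hw0 hw1]
    simpa only [← sub_eq_add_neg] using
      mul_add_div_add_mono (by linarith) hP1 (by linarith) (neg_le_neg hKp)
  have halarm : cPr w (fun ω => ∃ k, s ω k = false) (fun ω => y j ω = false)
      ≤ cPr w (fun ω => ∃ k, s ω k = false) (fun ω => y i ω = false) := by
    rw [hyi.cPr_seriesFail_alarm hw0 hw1, hyj.cPr_seriesFail_alarm hw0 hw1]
    exact mul_add_div_add_mono hFA0 hP1 hj0 hKp
  have hclear_le : cPr w (fun ω => ∃ k, s ω k = false) (fun ω => y j ω = true)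
      ≤ Pr w (fun ω => ∃ k, s ω k = false) := by
    rw [hyj.cPr_seriesFail_clear hw0 hw1]
    simpa only [← sub_eq_add_neg] using
      mul_add_div_add_le hP1 (by linarith) (neg_nonpos.2 hKpj)
  have hle_alarm : Pr w (fun ω => ∃ k, s ω k = false)
      ≤ cPr w (fun ω => ∃ k, s ω k = false) (fun ω => y j ω = false) := by
    rw [hyj.cPr_seriesFail_alarm hw0 hw1]
    exact le_mul_add_div_add hP1 hj0 hKpj
  refine ⟨⟨hclear, halarm⟩, fun l hl => sub_le_sub_left ?_ _⟩
  exact hl.mul_add_mul_le_of_mem_Icc (cPr_mem_Icc hw0 _ _) (cPr_mem_Icc hw0 _ _)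
    ⟨hclear, hclear_le.trans (hle_alarm.trans halarm)⟩
    ⟨hclear.trans (hclear_le.trans hle_alarm), halarm⟩
    ⟨Pr_nonneg hw0 _, Pr_le_one hw0 hw1 _⟩
    (by rw [Pr_mul_cPr_add_Pr_mul_cPr hw0 hw1, Pr_mul_cPr_add_Pr_mul_cPr hw0 hw1])

/-- In a series system (the system fails iff some component fails), with the
same inspection error rates for all components, if `p_i ≥ p_j` then the posterior intervals
are nested (`P[u=0 | y_i=1] ≤ P[u=0 | y_j=1]` and `P[u=0 | y_i=0] ≥ P[u=0 | y_j=0]`) and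
consequently for every concave loss `l*` one has `VoI_G(i) ≥ VoI_G(j)`: the most vulnerable
component maximizes `VoI_G`, regardless of the interdependence among components' states and
of the adopted concave loss function. -/
theorem series_global_prefers_most_vulnerable {Ω : Type*} [Fintype Ω] {N : ℕ} (w : Ω → ℝ)
    (hw0 : ∀ ω, 0 ≤ w ω) (hw1 : ∑ ω, w ω = 1)
    (s : Ω → Fin N → Bool) (y : Fin N → Ω → Bool)
    (εFA εFS : ℝ) (hFA0 : 0 ≤ εFA) (hFA : εFA < 1/2) (hFS0 : 0 ≤ εFS) (hFS : εFS < 1/2)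
    (hemit : ∀ (k : Fin N) (σ : Fin N → Bool), 0 < Pr w (fun ω => s ω = σ) →
      cPr w (fun ω => y k ω = false) (fun ω => s ω = σ)
        = if σ k = true then εFA else 1 - εFS)
    (i j : Fin N)
    (hi0 : 0 < Pr w (fun ω => y i ω = false)) (hi1 : Pr w (fun ω => y i ω = false) < 1)
    (hj0 : 0 < Pr w (fun ω => y j ω = false)) (hj1 : Pr w (fun ω => y j ω = false) < 1)
    (hpij : Pr w (fun ω => s ω j = false) ≤ Pr w (fun ω => s ω i = false)) :
    (cPr w (fun ω => ∃ k, s ω k = false) (fun ω => y i ω = true)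
        ≤ cPr w (fun ω => ∃ k, s ω k = false) (fun ω => y j ω = true)
      ∧ cPr w (fun ω => ∃ k, s ω k = false) (fun ω => y j ω = false)
        ≤ cPr w (fun ω => ∃ k, s ω k = false) (fun ω => y i ω = false))
    ∧ ∀ l : ℝ → ℝ, ConcaveOn ℝ (Set.Icc (0:ℝ) 1) l →
        VoIG w (fun ω => ∃ k, s ω k = false) (y j) l
          ≤ VoIG w (fun ω => ∃ k, s ω k = false) (y i) l :=
  series_global_prefers_most_vulnerable_general w hw0 hw1 s y εFA εFS hFA0 hFA hFS hemit i j hi1 hj0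
    hj1 hpij
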